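/- arXiv:2506.20628 — 2 statements merged into one kernel-verified Lean document; each statement's English description precedes it below -/
import Mathlib

section
/- If P and Q are symmetric positive definite matrices of the same size with det(P) = det(Q) and P ⪰ Q (i.e., P - Q is positive semidefinite), then P = Q. -/
open Matrix

theorem det_eq_and_loewner_ge_imp_eq {n : ℕ} (P Q : Matrix (Fin n) (Fin n) ℝ)
    (hP : P.PosDef) (hQ : Q.PosDef) (hdet : P.det = Q.det)
    (hle : (P - Q).PosSemidef) : P = Q := by
  set B := (open scoped MatrixOrder in CFC.sqrt Q) with hB
  have hBpsd : B.PosSemidef := by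
    open scoped MatrixOrder in exact Matrix.nonneg_iff_posSemidef.mp (CFC.sqrt_nonneg Q)
  have hBB : B * B = Q := by
    open scoped MatrixOrder in exact CFC.sqrt_mul_sqrt_self Q hQ.posSemidef.nonneg
  have hdetB : B.det * B.det = Q.det := by rw [← det_mul, hBB]
  have hQdet : Q.det ≠ 0 := hQ.det_pos.ne'
  have hBdet : B.det ≠ 0 := by
    intro h; rw [h, mul_zero] at hdetB; exact hQdet hdetB.symm
  have hBunit : IsUnit B.det := isUnit_iff_ne_zero.mpr hBdet
  have hBinv : B * B⁻¹ = 1 := mul_nonsing_inv B hBunit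
  have hBinv' : B⁻¹ * B = 1 := nonsing_inv_mul B hBunit
  have hBh : Bᴴ = B := hBpsd.isHermitian
  have hBih : (B⁻¹)ᴴ = B⁻¹ := by
    rw [show (B⁻¹)ᴴ = (Bᴴ)⁻¹ from conjTranspose_nonsing_inv B, hBh]
  set R := B⁻¹ * P * B⁻¹ with hR
  have hRherm : R.IsHermitian := by
    unfold Matrix.IsHermitian
    rw [hR, conjTranspose_mul, conjTranspose_mul, hBih, hP.isHermitian.eq, mul_assoc]
  have hRQ : B⁻¹ * Q * B⁻¹ = 1 := by
    rw [← hBB, ← mul_assoc, mul_assoc (B⁻¹ * B), hBinv', hBinv, one_mul]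
  have hR1 : (R - 1).PosSemidef := by
    have : R - 1 = B⁻¹ * (P - Q) * (B⁻¹)ᴴ := by
      rw [hBih, hR, ← hRQ, Matrix.mul_sub, Matrix.sub_mul]
    rw [this]
    exact hle.mul_mul_conjTranspose_same B⁻¹
  have hdetR : R.det = 1 := by
    rw [hR, det_mul, det_mul, det_nonsing_inv, Ring.inverse_eq_inv']
    field_simp [hdet, ← hdetB]
    rw [hdet, ← hdetB, sq]
  -- eigenvalues of R are ≥ 1
  have heig : ∀ i, 1 ≤ hRherm.eigenvalues i := by
    intro i
    set v := ⇑(hRherm.eigenvectorBasis i) with hv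
    have hvv : star v ⬝ᵥ v = 1 := by
      have h1 := hRherm.eigenvectorBasis.orthonormal.1 i
      have := (EuclideanSpace.inner_eq_star_dotProduct (hRherm.eigenvectorBasis i)
        (hRherm.eigenvectorBasis i)).symm
      rw [inner_self_eq_norm_sq_to_K, h1] at this
      simpa using this
    have key := hR1.dotProduct_mulVec_nonneg v
    rw [sub_mulVec, dotProduct_sub, one_mulVec, hRherm.mulVec_eigenvectorBasis i,
      dotProduct_smul, hvv] at key
    simp only [smul_eq_mul, mul_one, map_sub, RCLike.one_re] at key
    have := hRherm.eigenvalues_eq i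
    rw [hRherm.mulVec_eigenvectorBasis i, dotProduct_smul, hvv] at this
    simp only [smul_eq_mul, mul_one] at this
    rw [this] at key ⊢
    linarith [key]
  have hprod : ∏ i, hRherm.eigenvalues i = 1 := by
    have := hRherm.det_eq_prod_eigenvalues
    rw [hdetR] at this
    exact_mod_cast this.symm
  have heq1 : ∀ i, hRherm.eigenvalues i = 1 := by
    intro i
    refine le_antisymm ?_ (heig i)
    have hsplit := Finset.mul_prod_erase Finset.univ hRherm.eigenvalues (Finset.mem_univ i)
    have hrest : 1 ≤ ∏ j ∈ Finset.univ.erase i, hRherm.eigenvalues j := by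
      calc (1:ℝ) = ∏ _j ∈ Finset.univ.erase i, (1:ℝ) := by simp
        _ ≤ _ := Finset.prod_le_prod (fun _ _ => zero_le_one) (fun j _ => heig j)
    nlinarith [heig i, hsplit, hprod]
  -- R = 1
  have hRone : R = 1 := by
    have hs := hRherm.spectral_theorem
    have hd : Matrix.diagonal (RCLike.ofReal ∘ hRherm.eigenvalues) = (1 : Matrix (Fin n) (Fin n) ℝ) := by
      ext j k
      by_cases h : j = k <;> simp [Matrix.diagonal_apply, Matrix.one_apply, h, heq1]
    rw [hd, map_one] at hs
    exact hs
  -- conclude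
  have : B * R * B = P := by
    rw [hR, ← mul_assoc, ← mul_assoc, hBinv, one_mul, mul_assoc, hBinv', mul_one]
  rw [hRone, mul_one, hBB] at this
  exact this.symm
end

section
/- Let (ε_k) be a sequence of nonnegative real numbers, λ ∈ (0,1), κ ∈ (0,1), and define β_k = Σ_{j=1}^{k-1} λ^{k-j-1} κ^j ε_j for k ≥ 2 (β_1 = 0). If (1/(k-1)) Σ_{j=1}^{k-1} ε_j is bounded by a constant C for all k ≥ 2 and κ/λ < 1, then (1/N) Σ_{k=1}^N β_k² → 0 as N → ∞. -/
open Finset Filter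

theorem cesaro_convolution_to_zero
    (ε : ℕ → ℝ) (lam κ C : ℝ)
    (hε : ∀ j, 0 ≤ ε j) (hlam0 : 0 < lam) (hlam1 : lam < 1)
    (hκ0 : 0 < κ) (hκ1 : κ < 1) (hκlam : κ / lam < 1)
    (hC : ∀ k : ℕ, 2 ≤ k → (1 / ((k : ℝ) - 1)) * ∑ j ∈ Ico 1 k, ε j ≤ C) :
    Tendsto (fun N : ℕ =>
        (1 / (N : ℝ)) * ∑ k ∈ Icc 1 N,
          (∑ j ∈ Ico 1 k, lam ^ (k - j - 1) * κ ^ j * ε j) ^ 2)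
      atTop (nhds 0) := by
  set r := κ / lam with hrdef
  have hr0 : 0 < r := div_pos hκ0 hlam0
  have hr1 : r < 1 := hκlam
  have hκr : κ = r * lam := by rw [hrdef, div_mul_cancel₀ κ hlam0.ne']
  have hC0 : 0 ≤ C := by
    have h2 := hC 2 le_rfl
    have he : ∑ j ∈ Ico 1 2, ε j = ε 1 := by simp
    rw [he] at h2
    norm_num at h2
    exact le_trans (hε 1) h2
  have hεj : ∀ j : ℕ, 1 ≤ j → ε j ≤ C * j := by
    intro j hj
    have h := hC (j + 1) (by omega)
    have hjpos : (0 : ℝ) < j := by exact_mod_cast hj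
    have hsum : ε j ≤ ∑ i ∈ Ico 1 (j + 1), ε i :=
      Finset.single_le_sum (fun i _ => hε i) (by simp [Finset.mem_Ico]; omega)
    have h' : ∑ i ∈ Ico 1 (j + 1), ε i ≤ C * j := by
      have heq : ((j : ℕ) + 1 : ℝ) - 1 = (j : ℝ) := by push_cast; ring
      rw [Nat.cast_add, Nat.cast_one] at h
      rw [show ((j : ℝ) + 1) - 1 = (j : ℝ) by ring] at h
      rw [one_div, inv_mul_le_iff₀ hjpos] at h
      linarith
    linarith
  set M : ℝ := r / (1 - r) ^ 2 with hMdef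
  have hM : HasSum (fun n : ℕ => (n : ℝ) * r ^ n) M :=
    hasSum_coe_mul_geometric_of_norm_lt_one
      (by rw [Real.norm_eq_abs, abs_of_pos hr0]; exact hr1)
  have hM0 : 0 ≤ M := by positivity
  have hβnn : ∀ k : ℕ, 0 ≤ ∑ j ∈ Ico 1 k, lam ^ (k - j - 1) * κ ^ j * ε j := by
    intro k
    apply Finset.sum_nonneg
    intro j _
    have := hε j
    positivity
  have hβle : ∀ k : ℕ,
      (∑ j ∈ Ico 1 k, lam ^ (k - j - 1) * κ ^ j * ε j) ≤ C * M * lam ^ (k - 1) := by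
    intro k
    have h1 : ∀ j ∈ Ico 1 k,
        lam ^ (k - j - 1) * κ ^ j * ε j ≤ lam ^ (k - 1) * C * ((j : ℝ) * r ^ j) := by
      intro j hj
      rw [Finset.mem_Ico] at hj
      have key : lam ^ (k - j - 1) * κ ^ j = lam ^ (k - 1) * r ^ j := by
        rw [hκr, mul_pow, ← mul_assoc, mul_comm (lam ^ (k - j - 1)) (r ^ j), mul_assoc,
          ← pow_add]
        have hkj : k - j - 1 + j = k - 1 := by omega
        rw [hkj, mul_comm]
      rw [key]
      have hb : lam ^ (k - 1) * r ^ j * ε j ≤ lam ^ (k - 1) * r ^ j * (C * j) := by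
        apply mul_le_mul_of_nonneg_left (hεj j hj.1)
        positivity
      calc lam ^ (k - 1) * r ^ j * ε j ≤ lam ^ (k - 1) * r ^ j * (C * j) := hb
        _ = lam ^ (k - 1) * C * ((j : ℝ) * r ^ j) := by ring
    calc (∑ j ∈ Ico 1 k, lam ^ (k - j - 1) * κ ^ j * ε j)
        ≤ ∑ j ∈ Ico 1 k, lam ^ (k - 1) * C * ((j : ℝ) * r ^ j) := Finset.sum_le_sum h1
      _ = lam ^ (k - 1) * C * ∑ j ∈ Ico 1 k, (j : ℝ) * r ^ j := by rw [Finset.mul_sum]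
      _ ≤ lam ^ (k - 1) * C * M := by
          apply mul_le_mul_of_nonneg_left _ (by positivity)
          exact sum_le_hasSum _ (fun i _ => by positivity) hM
      _ = C * M * lam ^ (k - 1) := by ring
  -- bound on β_k^2
  have hβ2 : ∀ k : ℕ,
      (∑ j ∈ Ico 1 k, lam ^ (k - j - 1) * κ ^ j * ε j) ^ 2
        ≤ (C * M) ^ 2 * (lam ^ 2) ^ (k - 1) := by
    intro k
    have := pow_le_pow_left₀ (hβnn k) (hβle k) 2
    calc (∑ j ∈ Ico 1 k, lam ^ (k - j - 1) * κ ^ j * ε j) ^ 2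
        ≤ (C * M * lam ^ (k - 1)) ^ 2 := this
      _ = (C * M) ^ 2 * (lam ^ 2) ^ (k - 1) := by
          rw [mul_pow, ← pow_mul, ← pow_mul, Nat.mul_comm]
  have hlam2 : lam ^ 2 < 1 := by nlinarith
  have hlam2' : (0 : ℝ) < lam ^ 2 := by positivity
  set B : ℝ := (C * M) ^ 2 * (1 - lam ^ 2)⁻¹ with hBdef
  have hBound : ∀ N : ℕ,
      (∑ k ∈ Icc 1 N, (∑ j ∈ Ico 1 k, lam ^ (k - j - 1) * κ ^ j * ε j) ^ 2) ≤ B := by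
    intro N
    have hgeom : ∑ k ∈ Icc 1 N, (lam ^ 2) ^ (k - 1) ≤ (1 - lam ^ 2)⁻¹ := by
      have : ∑ k ∈ Icc 1 N, (lam ^ 2) ^ (k - 1) = ∑ i ∈ range N, (lam ^ 2) ^ i := by
        rw [show Icc 1 N = Ico 1 (N + 1) by rw [Finset.Ico_add_one_right_eq_Icc],
          Finset.sum_Ico_eq_sum_range]
        simp
      rw [this]
      exact sum_le_hasSum _ (fun i _ => by positivity)
        (hasSum_geometric_of_lt_one hlam2'.le hlam2)
    calc (∑ k ∈ Icc 1 N, (∑ j ∈ Ico 1 k, lam ^ (k - j - 1) * κ ^ j * ε j) ^ 2)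
        ≤ ∑ k ∈ Icc 1 N, (C * M) ^ 2 * (lam ^ 2) ^ (k - 1) :=
          Finset.sum_le_sum (fun k _ => hβ2 k)
      _ = (C * M) ^ 2 * ∑ k ∈ Icc 1 N, (lam ^ 2) ^ (k - 1) := by rw [Finset.mul_sum]
      _ ≤ B := by
          rw [hBdef]
          exact mul_le_mul_of_nonneg_left hgeom (by positivity)
  apply squeeze_zero (g := fun N : ℕ => B / N)
  · intro N
    apply mul_nonneg (by positivity)
    exact Finset.sum_nonneg fun k _ => sq_nonneg _
  · intro N
    rw [one_div, div_eq_mul_inv, mul_comm B]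
    exact mul_le_mul_of_nonneg_left (hBound N) (by positivity)
  · exact tendsto_const_div_atTop_nhds_zero_nat B
end
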